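/- arXiv:1407.7059 — 8 statements merged into one kernel-verified Lean document; each statement's English description precedes it below -/
import Mathlib

section
/- Let A be an n×n real matrix that is diagonalizable with nonnegative eigenvalues, and suppose the entrywise powers A^α (defined via A^α = S D^α S^{-1} for a diagonalization A = S D S^{-1}) satisfy: A^α is entrywise nonnegative for all α in the real interval [m, m+1] for some positive integer m. Then A^α is entrywise nonnegative for all real α ≥ m. -/
/-! Since `A^(α+1) = A * A^α` and `A` is entrywise nonnegative, nonnegativity of `A^α` passes from
`α` to `α + 1`; unit steps from `[m, m + 1]` reach every `α ≥ m`. -/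

open Matrix

/-- The continuous power `A^α := S * D^α * S⁻¹` of a diagonalizable matrix
`A = S * diagonal d * S⁻¹` with nonnegative eigenvalues `d`. -/
noncomputable def contPow {n : ℕ} (S : Matrix (Fin n) (Fin n) ℝ) (d : Fin n → ℝ) (α : ℝ) :
    Matrix (Fin n) (Fin n) ℝ :=
  S * Matrix.diagonal (fun i => d i ^ α) * S⁻¹

theorem Real.forall_ge_of_forall_Icc_of_add_one {P : ℝ → Prop} {a : ℝ}
    (hIcc : ∀ x ∈ Set.Icc a (a + 1), P x) (hstep : ∀ x, a ≤ x → P x → P (x + 1)) :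
    ∀ x, a ≤ x → P x := by
  have shifted : ∀ k : ℕ, ∀ x ∈ Set.Icc (a + k) (a + k + 1), P x := by
    intro k
    induction k with
    | zero => simpa using hIcc
    | succ k ih =>
      rintro x ⟨hlo, hhi⟩
      push_cast at hlo hhi
      have hk : (0 : ℝ) ≤ k := k.cast_nonneg
      simpa using hstep (x - 1) (by linarith) (ih (x - 1) ⟨by linarith, by linarith⟩)
  intro x hx
  have h0 : 0 ≤ x - a := sub_nonneg.2 hx
  exact shifted ⌊x - a⌋₊ x
    ⟨by linarith [Nat.floor_le h0], by linarith [Nat.lt_floor_add_one (x - a)]⟩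

section contPow

variable {n : ℕ} {S : Matrix (Fin n) (Fin n) ℝ} {d : Fin n → ℝ}

theorem contPow_add_one (hd : ∀ i, 0 ≤ d i) (hS : IsUnit S.det) {α : ℝ} (hα : α + 1 ≠ 0) :
    contPow S d (α + 1) = S * diagonal d * S⁻¹ * contPow S d α := by
  have hpow : (fun i => d i ^ (α + 1)) = fun i => d i * d i ^ α := by
    funext i
    rw [Real.rpow_add_one' (hd i) hα, mul_comm]
  simp only [contPow, hpow, ← diagonal_mul_diagonal, Matrix.mul_assoc,
    nonsing_inv_mul_cancel_left _ _ hS]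

theorem contPow_add_one_nonneg (hd : ∀ i, 0 ≤ d i) (hS : IsUnit S.det)
    (hA : ∀ i j, 0 ≤ (S * diagonal d * S⁻¹) i j) {α : ℝ} (hα : 0 ≤ α)
    (hpow : ∀ i j, 0 ≤ contPow S d α i j) (i j : Fin n) :
    0 ≤ contPow S d (α + 1) i j := by
  rw [contPow_add_one hd hS (by positivity), mul_apply]
  exact Finset.sum_nonneg fun l _ => mul_nonneg (hA i l) (hpow l j)

end contPow

theorem contPow_nonneg_of_nonneg_on_Icc_general {n : ℕ}
    (A S : Matrix (Fin n) (Fin n) ℝ) (d : Fin n → ℝ)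
    (hA : ∀ i j, 0 ≤ A i j)
    (hd : ∀ i, 0 ≤ d i)
    (hS : IsUnit S.det)
    (hdiag : A = S * Matrix.diagonal d * S⁻¹)
    (m : ℕ)
    (hIcc : ∀ α ∈ Set.Icc (m : ℝ) ((m : ℝ) + 1), ∀ i j, 0 ≤ contPow S d α i j) :
    ∀ α : ℝ, (m : ℝ) ≤ α → ∀ i j, 0 ≤ contPow S d α i j := by
  subst hdiag
  refine Real.forall_ge_of_forall_Icc_of_add_one hIcc fun α hα hpow => ?_
  exact contPow_add_one_nonneg hd hS hA (m.cast_nonneg.trans hα) hpow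

/-- If `A` is an entrywise nonnegative, diagonalizable matrix with nonnegative eigenvalues
and `A^α` is entrywise nonnegative for all `α ∈ [m, m+1]` (`m` a positive integer),
then `A^α` is entrywise nonnegative for all real `α ≥ m`. -/
theorem contPow_nonneg_of_nonneg_on_Icc {n : ℕ}
    (A S : Matrix (Fin n) (Fin n) ℝ) (d : Fin n → ℝ)
    (hA : ∀ i j, 0 ≤ A i j)
    (hd : ∀ i, 0 ≤ d i)
    (hS : IsUnit S.det)
    (hdiag : A = S * Matrix.diagonal d * S⁻¹)
    (m : ℕ) (hm : 0 < m)
    (hIcc : ∀ α ∈ Set.Icc (m : ℝ) ((m : ℝ) + 1), ∀ i j, 0 ≤ contPow S d α i j) :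
    ∀ α : ℝ, (m : ℝ) ≤ α → ∀ i j, 0 ≤ contPow S d α i j :=
  contPow_nonneg_of_nonneg_on_Icc_general A S d hA hd hS hdiag m hIcc
end

section
/- For each n there exists a real number m(n) such that for every n×n entrywise nonnegative, diagonalizable real matrix A with nonnegative eigenvalues, the continuous power A^α is entrywise nonnegative (hence GDN) for all real α ≥ m(n). -/
open Matrix

/-!
For `α ≠ 0` each entry of `A^α` is an exponential sum `∑ c k * exp (log (d k) * α)` with at most
`n` terms, and by Rolle's theorem such a sum has fewer than `n` zeros unless it vanishes
identically. Since `A^(1 + t) = A * A^t` with `A ≥ 0`, a negative entry of `A^α` forces a negative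
entry of `A^(α - k)` for every natural `k < α`; and an entry negative at `x ≥ 1` has a zero in
`(x - 1, x)`, because `A^⌊x⌋` is nonnegative. For `α ≥ n³`, pigeonholing the `n³` points `α - k`
over the `n²` entries gives one entry that is negative at `n` of them, hence has `n` zeros without
vanishing identically.
-/

open Real Finset

theorem exists_zeros_deriv_of_zeros {f f' : ℝ → ℝ}
    (hf : ∀ x, HasDerivAt f (f' x) x) (T : Finset ℝ) (hT : ∀ x ∈ T, f x = 0) :
    ∃ T' : Finset ℝ, (∀ x ∈ T', f' x = 0) ∧ #T ≤ #T' + 1 := by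
  have hrolle : ∀ p : ℝ × ℝ, ∃ z, p ∈ T ×ˢ T → p.1 < p.2 → z ∈ Set.Ioo p.1 p.2 ∧ f' z = 0 := by
    rintro ⟨a, b⟩
    by_cases h : (a, b) ∈ T ×ˢ T ∧ a < b
    · obtain ⟨ha, hb⟩ := mem_product.1 h.1
      obtain ⟨z, hz, hz0⟩ := exists_hasDerivAt_eq_zero h.2
        (fun x _ => (hf x).continuousAt.continuousWithinAt) ((hT a ha).trans (hT b hb).symm)
        (fun x _ => hf x)
      exact ⟨z, fun _ _ => ⟨hz, hz0⟩⟩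
    · exact ⟨0, fun h₁ h₂ => absurd ⟨h₁, h₂⟩ h⟩
  choose z hz using hrolle
  refine ⟨{p ∈ T ×ˢ T | p.1 < p.2}.image z, ?_, card_le_of_interleaved fun a ha b hb hab _ => ?_⟩
  · simp only [mem_image, mem_filter]
    rintro _ ⟨p, ⟨hp, hlt⟩, rfl⟩
    exact (hz p hp hlt).2
  · have hp : (a, b) ∈ T ×ˢ T := mem_product.2 ⟨ha, hb⟩
    exact ⟨z (a, b), mem_image_of_mem _ (mem_filter.2 ⟨hp, hab⟩), (hz _ hp hab).1⟩

theorem hasDerivAt_sum_mul_exp {ι : Type*} (s : Finset ι) (c e : ι → ℝ) (x : ℝ) :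
    HasDerivAt (fun y => ∑ i ∈ s, c i * exp (e i * y)) (∑ i ∈ s, c i * e i * exp (e i * x)) x :=
  HasDerivAt.fun_sum fun i _ => by
    simpa [mul_assoc, mul_comm (e i)] using
      (((hasDerivAt_id x).const_mul (e i)).exp).const_mul (c i)

/-- Induction on `s`: Rolle's theorem applies to `exp (-e a * x)` times the sum, whose derivative
has one term fewer. -/
theorem sum_mul_exp_eq_zero_of_card_le {ι : Type*} (s : Finset ι) (c e : ι → ℝ) (T : Finset ℝ)
    (hcard : #s ≤ #T) (hT : ∀ x ∈ T, ∑ i ∈ s, c i * exp (e i * x) = 0) (x : ℝ) :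
    ∑ i ∈ s, c i * exp (e i * x) = 0 := by
  classical
  induction s using Finset.induction_on generalizing c e T x with
  | empty => simp
  | insert a s ha ih =>
    rw [card_insert_of_notMem ha] at hcard
    set g : ℝ → ℝ := fun y => ∑ i ∈ insert a s, c i * exp ((e i - e a) * y)
    have hfg : ∀ y, ∑ i ∈ insert a s, c i * exp (e i * y) = exp (e a * y) * g y := fun y => by
      simp only [g, mul_sum, mul_left_comm (exp _), ← exp_add]
      exact sum_congr rfl fun i _ => by ring_nf
    have hg : ∀ y, HasDerivAt g (∑ i ∈ s, c i * (e i - e a) * exp ((e i - e a) * y)) y := by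
      intro y
      simpa [g, ha] using hasDerivAt_sum_mul_exp (insert a s) c (fun i => e i - e a) y
    have hgT : ∀ y ∈ T, g y = 0 := fun y hy =>
      (mul_eq_zero.1 ((hfg y).symm.trans (hT y hy))).resolve_left (exp_ne_zero _)
    obtain ⟨T', hT', hcard'⟩ := exists_zeros_deriv_of_zeros hg T hgT
    have hg'_zero := ih (fun i => c i * (e i - e a)) (fun i => e i - e a) T' (by omega) hT'
    obtain ⟨t, ht⟩ : T.Nonempty := card_pos.1 (by omega)
    have hg_const := is_const_of_deriv_eq_zero (fun y => (hg y).differentiableAt)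
      (fun y => (hg y).deriv.trans (hg'_zero y)) x t
    rw [hfg, hg_const, hgT t ht, mul_zero]

section contPow

variable {n : ℕ} {S : Matrix (Fin n) (Fin n) ℝ} {d : Fin n → ℝ}

theorem contPow_one : contPow S d 1 = S * diagonal d * S⁻¹ := by
  simp [contPow]

theorem contPow_add (hd : ∀ i, 0 ≤ d i) (hS : IsUnit S.det) {s t : ℝ} (hst : s + t ≠ 0) :
    contPow S d (s + t) = contPow S d s * contPow S d t := by
  simp only [contPow, rpow_add' (hd _) hst, ← diagonal_mul_diagonal, Matrix.mul_assoc,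
    nonsing_inv_mul_cancel_left _ _ hS]

theorem contPow_apply_eq_sum_exp (hd : ∀ i, 0 ≤ d i) {α : ℝ} (hα : α ≠ 0) (i j : Fin n) :
    contPow S d α i j =
      ∑ k ∈ univ.filter (fun k => 0 < d k), S i k * S⁻¹ k j * exp (log (d k) * α) := by
  rw [sum_filter, contPow, mul_apply]
  refine sum_congr rfl fun k _ => ?_
  rw [mul_diagonal]
  split_ifs with hk
  · rw [rpow_def_of_pos hk]
    ring
  · rw [le_antisymm (not_lt.1 hk) (hd k), zero_rpow hα]
    ring

theorem contPow_one_add_apply_nonneg (hA : ∀ i j, 0 ≤ (S * diagonal d * S⁻¹) i j)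
    (hd : ∀ i, 0 ≤ d i) (hS : IsUnit S.det) {t : ℝ} (ht : 1 + t ≠ 0)
    (hnonneg : ∀ i j, 0 ≤ contPow S d t i j) (i j : Fin n) : 0 ≤ contPow S d (1 + t) i j := by
  rw [contPow_add hd hS ht, contPow_one, mul_apply]
  exact sum_nonneg fun k _ => mul_nonneg (hA i k) (hnonneg k j)

theorem contPow_natCast_apply_nonneg (hA : ∀ i j, 0 ≤ (S * diagonal d * S⁻¹) i j)
    (hd : ∀ i, 0 ≤ d i) (hS : IsUnit S.det) {N : ℕ} (hN : 1 ≤ N) (i j : Fin n) :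
    0 ≤ contPow S d N i j := by
  induction N, hN using Nat.le_induction generalizing i j with
  | base => simpa [contPow_one] using hA i j
  | succ N hN ih =>
    rw [Nat.cast_succ, add_comm]
    exact contPow_one_add_apply_nonneg hA hd hS (by positivity) ih i j

theorem exists_contPow_apply_neg_sub_natCast (hA : ∀ i j, 0 ≤ (S * diagonal d * S⁻¹) i j)
    (hd : ∀ i, 0 ≤ d i) (hS : IsUnit S.det) {t : ℝ} (hneg : ∃ i j, contPow S d t i j < 0)
    {k : ℕ} (hk : (k : ℝ) < t) : ∃ i j, contPow S d (t - k) i j < 0 := by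
  induction k with
  | zero => simpa using hneg
  | succ k ih =>
    push_cast at hk ⊢
    contrapose! ih
    refine ⟨by linarith, fun i j => ?_⟩
    simpa [sub_add_eq_sub_sub] using
      contPow_one_add_apply_nonneg hA hd hS (t := t - (k + 1)) (by linarith) ih i j

theorem exists_contPow_apply_eq_zero (hA : ∀ i j, 0 ≤ (S * diagonal d * S⁻¹) i j)
    (hd : ∀ i, 0 ≤ d i) (hS : IsUnit S.det) {x : ℝ} (hx : 1 ≤ x) {i j : Fin n}
    (hneg : contPow S d x i j < 0) : ∃ z ∈ Set.Ioo (x - 1) x, contPow S d z i j = 0 := by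
  have hN : 1 ≤ ⌊x⌋₊ := Nat.one_le_floor_iff x |>.2 hx
  have hNx : (⌊x⌋₊ : ℝ) ≤ x := Nat.floor_le (by linarith)
  have hcont : ContinuousOn (fun y => contPow S d y i j) (Set.Icc (⌊x⌋₊ : ℝ) x) := by
    refine ContinuousOn.congr (by fun_prop) fun y hy => contPow_apply_eq_sum_exp hd ?_ i j
    have : (1 : ℝ) ≤ ⌊x⌋₊ := by exact_mod_cast hN
    linarith [hy.1]
  obtain ⟨z, hz, hz0⟩ := intermediate_value_Icc' hNx hcont
    ⟨hneg.le, contPow_natCast_apply_nonneg hA hd hS hN i j⟩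
  refine ⟨z, ⟨(Nat.sub_one_lt_floor x).trans_le hz.1, hz.2.lt_of_ne ?_⟩, hz0⟩
  rintro rfl
  exact hneg.ne hz0

theorem card_lt_of_contPow_apply_neg (hA : ∀ i j, 0 ≤ (S * diagonal d * S⁻¹) i j)
    (hd : ∀ i, 0 ≤ d i) (hS : IsUnit S.det) (i j : Fin n) {α : ℝ} {B : Finset ℕ}
    (hB : ∀ k ∈ B, (k : ℝ) + 1 ≤ α) (hneg : ∀ k ∈ B, contPow S d (α - k) i j < 0) :
    #B < n := by
  by_contra! hn
  have hzero : ∀ k ∈ B, ∃ z ∈ Set.Ioo (α - k - 1) (α - k), contPow S d z i j = 0 :=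
    fun k hk => exists_contPow_apply_eq_zero hA hd hS (by linarith [hB k hk]) (hneg k hk)
  choose! ζ hζ hζ0 using hzero
  have hanti : StrictAntiOn ζ B := fun a ha b hb hab => by
    have : (a : ℝ) + 1 ≤ b := by exact_mod_cast hab
    linarith [(hζ a ha).1, (hζ b hb).2]
  have hsum := sum_mul_exp_eq_zero_of_card_le (univ.filter fun k => 0 < d k)
    (fun k => S i k * S⁻¹ k j) (fun k => log (d k)) (B.image ζ)
    (card_filter_le _ _ |>.trans <| by simpa [card_image_of_injOn hanti.injOn] using hn)
    (by
      simp only [mem_image, forall_exists_index, and_imp]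
      rintro _ k hk rfl
      rw [← contPow_apply_eq_sum_exp hd (by linarith [(hζ k hk).1, hB k hk]), hζ0 k hk])
  obtain ⟨k, hk⟩ : B.Nonempty := card_pos.1 (i.pos.trans_le hn)
  have hk_neg := hneg k hk
  rw [contPow_apply_eq_sum_exp hd (by linarith [hB k hk]), hsum] at hk_neg
  exact hk_neg.false

end contPow

/-- Existence of a critical exponent for GDN matrices: for each `n` there is `m(n) : ℝ` such
that for every `n × n` entrywise nonnegative, diagonalizable matrix with nonnegative
eigenvalues, all continuous powers `A^α` with `α ≥ m(n)` are entrywise nonnegative. -/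
theorem exists_GDN_critical_exponent_bound (n : ℕ) :
    ∃ m : ℝ, ∀ (A S : Matrix (Fin n) (Fin n) ℝ) (d : Fin n → ℝ),
      (∀ i j, 0 ≤ A i j) →
      (∀ i, 0 ≤ d i) →
      IsUnit S.det →
      A = S * Matrix.diagonal d * S⁻¹ →
      ∀ α : ℝ, m ≤ α → ∀ i j, 0 ≤ contPow S d α i j := by
  refine ⟨(n ^ 3 : ℕ), fun A S d hA hd hS hAS α hα => ?_⟩
  subst hAS
  by_contra! hneg
  have hnegk : ∀ k ∈ range (n ^ 3), ∃ p : Fin n × Fin n, contPow S d (α - k) p.1 p.2 < 0 := by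
    intro k hk
    have hkα : (k : ℝ) < α := lt_of_lt_of_le (by exact_mod_cast mem_range.1 hk) hα
    obtain ⟨i, j, h⟩ := exists_contPow_apply_neg_sub_natCast hA hd hS hneg hkα
    exact ⟨(i, j), h⟩
  have : Nonempty (Fin n × Fin n) := let ⟨i, j, _⟩ := hneg; ⟨(i, j)⟩
  choose! p hp using hnegk
  obtain ⟨q, -, hq⟩ := exists_le_card_fiber_of_mul_le_card_of_maps_to (f := p)
    (s := range (n ^ 3)) (n := n) (fun _ _ => mem_univ _) univ_nonempty
    (by simp [pow_three, mul_assoc])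
  refine (card_lt_of_contPow_apply_neg hA hd hS q.1 q.2 (α := α) (fun k hk => ?_)
    (fun k hk => ?_)).not_ge hq
  · have : k + 1 ≤ n ^ 3 := mem_range.1 (mem_filter.1 hk).1
    exact le_trans (by exact_mod_cast this) hα
  · obtain ⟨hk_range, rfl⟩ := mem_filter.1 hk
    exact hp k hk_range
end

section
/- Let A be an invertible GDN matrix and i a diagonal index. If the entry function α ↦ (A^α)_{ii} is an exponential polynomial p with at most w real roots counted with multiplicity, and w > 0, then the set {α > 1 : (A^α)_{ii} < 0} has at most ⌊w/2⌋ connected components. -/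
/-!
Every point `x` of the negativity set lies in a maximal interval `(λ x, ρ x)` on which `p < 0`;
both endpoints exist and are roots, because `p 0 = 1 > 0` and `p k = (A ^ k)ᵢᵢ ≥ 0` at positive
integers `k`. Points in distinct components have distinct left ends and distinct right ends, so
`2 · #s` endpoints are counted; an endpoint that is both `ρ x` and `λ y` is a local maximum of `p`
with value `0`, hence a double root. So the `2 · #s` endpoints carry multiplicity at most `w`.
-/

open Matrix Finset

theorem contPow_natCast {n : ℕ} {S : Matrix (Fin n) (Fin n) ℝ} (hS : IsUnit S.det)
    (d : Fin n → ℝ) (k : ℕ) : contPow S d k = (S * diagonal d * S⁻¹) ^ k := by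
  have h := Units.conj_pow (nonsingInvUnit S hS) (diagonal d) k
  simp only [contPow, Real.rpow_natCast]
  exact (h.trans (by rw [diagonal_pow]; rfl)).symm

-- A lower bound for the multiplicity of a root `t` of `f`.
noncomputable def rootMult (f : ℝ → ℝ) (t : ℝ) : ℕ := if deriv f t = 0 then 2 else 1

theorem one_le_rootMult (f : ℝ → ℝ) (t : ℝ) : 1 ≤ rootMult f t := by
  unfold rootMult; split_ifs <;> omega

theorem iteratedDeriv_eq_zero_of_lt_rootMult {f : ℝ → ℝ} {t : ℝ} (ht : f t = 0) {k : ℕ}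
    (hk : k < rootMult f t) : iteratedDeriv k f t = 0 := by
  unfold rootMult at hk
  split_ifs at hk with hd
  · interval_cases k
    · simpa using ht
    · simpa using hd
  · obtain rfl : k = 0 := by omega
    simpa using ht

theorem card_add_card_le_sum {α : Type*} [DecidableEq α] {A B : Finset α} {m : α → ℕ}
    (h₁ : ∀ t ∈ A ∪ B, 1 ≤ m t) (h₂ : ∀ t ∈ A ∩ B, 2 ≤ m t) :
    #A + #B ≤ ∑ t ∈ A ∪ B, m t := by
  calc #A + #B = ∑ t ∈ A ∪ B, ((if t ∈ A then 1 else 0) + (if t ∈ B then 1 else 0)) := by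
        rw [sum_add_distrib, sum_boole, sum_boole]
        simp
    _ ≤ ∑ t ∈ A ∪ B, m t := by
        refine sum_le_sum fun t ht => ?_
        have := h₁ t ht
        split_ifs with hA hB hB
        · have := h₂ t (mem_inter.2 ⟨hA, hB⟩)
          omega
        all_goals omega

/- When `f x < 0`, these are the endpoints of the maximal interval around `x` on which `f < 0`
(junk values `sInf ∅ = sSup ∅ = 0` if `f` stays negative on that side). -/
noncomputable def negRightEnd (f : ℝ → ℝ) (x : ℝ) : ℝ := sInf {t | x ≤ t ∧ 0 ≤ f t}

noncomputable def negLeftEnd (f : ℝ → ℝ) (x : ℝ) : ℝ := sSup {t | t ≤ x ∧ 0 ≤ f t}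

section NegativityInterval

variable {f : ℝ → ℝ} {x y z t : ℝ}

theorem negRightEnd_le (hxz : x ≤ z) (hz : 0 ≤ f z) : negRightEnd f x ≤ z :=
  csInf_le ⟨x, fun _ ht => ht.1⟩ ⟨hxz, hz⟩

theorem le_negLeftEnd (hzx : z ≤ x) (hz : 0 ≤ f z) : z ≤ negLeftEnd f x :=
  le_csSup ⟨x, fun _ ht => ht.1⟩ ⟨hzx, hz⟩

theorem neg_of_lt_negRightEnd (hxt : x ≤ t) (ht : t < negRightEnd f x) : f t < 0 :=
  not_le.1 fun h => (negRightEnd_le hxt h).not_gt ht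

theorem neg_of_negLeftEnd_lt (htx : t ≤ x) (ht : negLeftEnd f x < t) : f t < 0 :=
  not_le.1 fun h => (le_negLeftEnd htx h).not_gt ht

theorem apply_negRightEnd (hf : Continuous f) (hfx : f x < 0) (hx : ∃ R, x ≤ R ∧ 0 ≤ f R) :
    f (negRightEnd f x) = 0 := by
  have hclosed : IsClosed {t | x ≤ t ∧ 0 ≤ f t} :=
    isClosed_Ici.inter (isClosed_le continuous_const hf)
  obtain ⟨hxr, hr⟩ := hclosed.csInf_mem hx ⟨x, fun _ ht => ht.1⟩
  obtain ⟨u, hu, hfu⟩ := intermediate_value_Icc hxr hf.continuousOn ⟨hfx.le, hr⟩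
  rwa [le_antisymm hu.2 (negRightEnd_le hu.1 hfu.ge)] at hfu

theorem apply_negLeftEnd (hf : Continuous f) (hfx : f x < 0) (hx : ∃ L, L ≤ x ∧ 0 ≤ f L) :
    f (negLeftEnd f x) = 0 := by
  have hclosed : IsClosed {t | t ≤ x ∧ 0 ≤ f t} :=
    isClosed_Iic.inter (isClosed_le continuous_const hf)
  obtain ⟨hlx, hl⟩ := hclosed.csSup_mem hx ⟨x, fun _ ht => ht.1⟩
  obtain ⟨u, hu, hfu⟩ := intermediate_value_Icc' hlx hf.continuousOn ⟨hfx.le, hl⟩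
  rwa [le_antisymm (le_negLeftEnd hu.2 hfu.ge) hu.1] at hfu

theorem lt_negRightEnd (hf : Continuous f) (hfx : f x < 0) (hx : ∃ R, x ≤ R ∧ 0 ≤ f R) :
    x < negRightEnd f x :=
  (le_csInf hx fun _ ht => ht.1).lt_of_ne
    fun h => hfx.ne (h ▸ apply_negRightEnd hf hfx hx)

theorem negLeftEnd_lt (hf : Continuous f) (hfx : f x < 0) (hx : ∃ L, L ≤ x ∧ 0 ≤ f L) :
    negLeftEnd f x < x :=
  (csSup_le hx fun _ ht => ht.1).lt_of_ne
    fun h => hfx.ne (h.symm ▸ apply_negLeftEnd hf hfx hx)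

theorem negRightEnd_lt_negRightEnd (hf : Continuous f) (hfy : f y < 0)
    (hy : ∃ R, y ≤ R ∧ 0 ≤ f R) (hz : z ∈ Set.Icc x y) (hfz : 0 ≤ f z) :
    negRightEnd f x < negRightEnd f y :=
  calc negRightEnd f x ≤ z := negRightEnd_le hz.1 hfz
    _ ≤ y := hz.2
    _ < negRightEnd f y := lt_negRightEnd hf hfy hy

theorem negLeftEnd_lt_negLeftEnd (hf : Continuous f) (hfx : f x < 0)
    (hx : ∃ L, L ≤ x ∧ 0 ≤ f L) (hz : z ∈ Set.Icc x y) (hfz : 0 ≤ f z) :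
    negLeftEnd f x < negLeftEnd f y :=
  calc negLeftEnd f x < x := negLeftEnd_lt hf hfx hx
    _ ≤ z := hz.1
    _ ≤ negLeftEnd f y := le_negLeftEnd hz.2 hfz

theorem isLocalMax_negRightEnd_of_eq_negLeftEnd (hf : Continuous f) (hfx : f x < 0)
    (hx : ∃ R, x ≤ R ∧ 0 ≤ f R) (hfy : f y < 0) (hy : ∃ L, L ≤ y ∧ 0 ≤ f L)
    (h : negRightEnd f x = negLeftEnd f y) : IsLocalMax f (negRightEnd f x) := by
  have hxt := lt_negRightEnd hf hfx hx
  have hty : negRightEnd f x < y := h ▸ negLeftEnd_lt hf hfy hy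
  filter_upwards [Ioo_mem_nhds hxt hty] with u hu
  rw [apply_negRightEnd hf hfx hx]
  rcases lt_trichotomy u (negRightEnd f x) with hut | rfl | htu
  · exact (neg_of_lt_negRightEnd hu.1.le hut).le
  · exact (apply_negRightEnd hf hfx hx).le
  · exact (neg_of_negLeftEnd_lt hu.2.le (h ▸ htu)).le

end NegativityInterval

theorem exists_roots_two_mul_card_le_sum_rootMult {f : ℝ → ℝ} (hf : Differentiable ℝ f)
    {s : Finset ℝ} (hneg : ∀ x ∈ s, f x < 0) (hleft : ∀ x ∈ s, ∃ L, L ≤ x ∧ 0 ≤ f L)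
    (hright : ∀ x ∈ s, ∃ R, x ≤ R ∧ 0 ≤ f R)
    (hgap : ∀ x ∈ s, ∀ y ∈ s, x < y → ∃ z ∈ Set.Icc x y, 0 ≤ f z) :
    ∃ T : Finset ℝ, (∀ t ∈ T, f t = 0) ∧ 2 * #s ≤ ∑ t ∈ T, rootMult f t := by
  have hc := hf.continuous
  have hrightMono : StrictMonoOn (negRightEnd f) s := fun x hx y hy hxy => by
    obtain ⟨z, hz, hfz⟩ := hgap x hx y hy hxy
    exact negRightEnd_lt_negRightEnd hc (hneg y hy) (hright y hy) hz hfz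
  have hleftMono : StrictMonoOn (negLeftEnd f) s := fun x hx y hy hxy => by
    obtain ⟨z, hz, hfz⟩ := hgap x hx y hy hxy
    exact negLeftEnd_lt_negLeftEnd hc (hneg x hx) (hleft x hx) hz hfz
  refine ⟨s.image (negRightEnd f) ∪ s.image (negLeftEnd f), ?_, ?_⟩
  · simp only [mem_union, mem_image]
    rintro t (⟨x, hx, rfl⟩ | ⟨x, hx, rfl⟩)
    · exact apply_negRightEnd hc (hneg x hx) (hright x hx)
    · exact apply_negLeftEnd hc (hneg x hx) (hleft x hx)
  · calc 2 * #s = #(s.image (negRightEnd f)) + #(s.image (negLeftEnd f)) := by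
          rw [card_image_of_injOn hrightMono.injOn, card_image_of_injOn hleftMono.injOn, two_mul]
      _ ≤ _ := card_add_card_le_sum (fun t _ => one_le_rootMult f t) ?_
    simp only [mem_inter, mem_image]
    rintro _ ⟨⟨x, hx, rfl⟩, ⟨y, hy, h⟩⟩
    have hmax := isLocalMax_negRightEnd_of_eq_negLeftEnd hc (hneg x hx) (hright x hx)
      (hneg y hy) (hleft y hy) h.symm
    simp [rootMult, hmax.deriv_eq_zero]

-- Two points of `s` lie in the same component iff the segment between them is negative.
theorem diag_negativity_components_le_general {n N : ℕ}
    (A S : Matrix (Fin n) (Fin n) ℝ) (d : Fin n → ℝ)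
    (hA : ∀ i j, 0 ≤ A i j)
    (hS : IsUnit S.det)
    (hdiag : A = S * Matrix.diagonal d * S⁻¹)
    (i : Fin n)
    (p : ℝ → ℝ) (a b : Fin N → ℝ)
    (hexp : ∀ t : ℝ, p t = ∑ k, a k * Real.exp (b k * t))
    (hp0 : p 0 = 1)
    (hpA : ∀ α : ℝ, 0 < α → p α = contPow S d α i i)
    (w : ℕ)
    (hroots : ∀ (s : Finset ℝ) (m : ℝ → ℕ),
      (∀ t ∈ s, 1 ≤ m t ∧ ∀ k < m t, iteratedDeriv k p t = 0) → ∑ t ∈ s, m t ≤ w) :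
    ∀ s : Finset ℝ,
      (∀ x ∈ s, x ∈ {α : ℝ | 1 < α ∧ contPow S d α i i < 0}) →
      (∀ x ∈ s, ∀ y ∈ s, x ≠ y →
        ¬ (Set.uIcc x y ⊆ {α : ℝ | 1 < α ∧ contPow S d α i i < 0})) →
      s.card ≤ w / 2 := by
  intro s hs hsep
  have hdiff : Differentiable ℝ p := by rw [funext hexp]; fun_prop
  have hpos : ∀ x ∈ s, 0 < x := fun x hx => one_pos.trans (hs x hx).1
  have hneg : ∀ x ∈ s, p x < 0 := fun x hx => (hpA x (hpos x hx)).trans_lt (hs x hx).2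
  have hnat : ∀ k : ℕ, 0 < k → 0 ≤ p k := fun k hk => by
    rw [hpA k (Nat.cast_pos.2 hk), contPow_natCast hS, ← hdiag]
    exact pow_apply_nonneg hA k i i
  have hgap : ∀ x ∈ s, ∀ y ∈ s, x < y → ∃ z ∈ Set.Icc x y, 0 ≤ p z := by
    intro x hx y hy hxy
    obtain ⟨z, hz, hzneg⟩ := Set.not_subset.1 (hsep x hx y hy hxy.ne)
    rw [Set.uIcc_of_le hxy.le] at hz
    have h1z : 1 < z := (hs x hx).1.trans_le hz.1
    exact ⟨z, hz, (hpA z (one_pos.trans h1z)).trans_ge (not_lt.1 fun h => hzneg ⟨h1z, h⟩)⟩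
  obtain ⟨T, hT, hcard⟩ := exists_roots_two_mul_card_le_sum_rootMult hdiff hneg
    (fun x hx => ⟨0, (hpos x hx).le, hp0 ▸ zero_le_one⟩)
    (fun x hx => ⟨⌈x⌉₊, Nat.le_ceil x, hnat _ (Nat.ceil_pos.2 (hpos x hx))⟩) hgap
  have hsum := hroots T (rootMult p) fun t ht =>
    ⟨one_le_rootMult p t, fun _ hk => iteratedDeriv_eq_zero_of_lt_rootMult (hT t ht) hk⟩
  omega

/-- Let `A` be an invertible GDN matrix and `i` a diagonal index.  If the entry function
`α ↦ (A^α)_{ii}` is an exponential polynomial `p` with at most `w > 0` real roots counted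
with multiplicity, then `{α > 1 : (A^α)_{ii} < 0}` has at most `⌊w/2⌋` connected components.
The component count is encoded by: any finite subset of the negativity set whose points lie
in pairwise distinct connected components has cardinality at most `⌊w/2⌋`. -/
theorem diag_negativity_components_le {n N : ℕ}
    (A S : Matrix (Fin n) (Fin n) ℝ) (d : Fin n → ℝ)
    (hA : ∀ i j, 0 ≤ A i j)
    (hd : ∀ i, 0 < d i)
    (hS : IsUnit S.det)
    (hdiag : A = S * Matrix.diagonal d * S⁻¹)
    (i : Fin n)
    (p : ℝ → ℝ) (a b : Fin N → ℝ)
    (hexp : ∀ t : ℝ, p t = ∑ k, a k * Real.exp (b k * t))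
    (hp0 : p 0 = 1)
    (hpA : ∀ α : ℝ, 0 < α → p α = contPow S d α i i)
    (w : ℕ) (hw : 0 < w)
    (hroots : ∀ (s : Finset ℝ) (m : ℝ → ℕ),
      (∀ t ∈ s, 1 ≤ m t ∧ ∀ k < m t, iteratedDeriv k p t = 0) → ∑ t ∈ s, m t ≤ w) :
    ∀ s : Finset ℝ,
      (∀ x ∈ s, x ∈ {α : ℝ | 1 < α ∧ contPow S d α i i < 0}) →
      (∀ x ∈ s, ∀ y ∈ s, x ≠ y →
        ¬ (Set.uIcc x y ⊆ {α : ℝ | 1 < α ∧ contPow S d α i i < 0})) →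
      s.card ≤ w / 2 :=
  diag_negativity_components_le_general A S d hA hS hdiag i p a b hexp hp0 hpA w hroots
end

section
/- Let A be an n×n entrywise nonnegative real matrix (n ≥ 2) all of whose eigenvalues are real and positive. Then A has at least two positive diagonal entries. -/
/-!
Both sides are compared through the coefficient of `X ^ (n - 2)` in the characteristic
polynomial, which is the sum of the `2 × 2` principal minors. For `∏ (X - C eᵢ)`, the
characteristic polynomial of `diagonal e`, these minors are the products `eᵢ eⱼ > 0`. For `A`
they are `aᵢᵢ aⱼⱼ - aᵢⱼ aⱼᵢ`, and if at most one diagonal entry is positive then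
`aᵢᵢ aⱼⱼ = 0`, so by nonnegativity every minor is `≤ 0`.
-/

open Matrix Polynomial

namespace Matrix

variable {n R : Type*} [DecidableEq n] [CommRing R]

theorem det_submatrix_pair (M : Matrix n n R) {i j : n} (hij : i ≠ j) :
    (M.submatrix (Subtype.val : ({i, j} : Finset n) → n) Subtype.val).det =
      M i i * M j j - M i j * M j i := by
  have hinj : Function.Injective ![i, j] := by
    intro a b hab
    fin_cases a <;> fin_cases b <;> simp_all
  have hmem : ∀ k, ![i, j] k ∈ ({i, j} : Finset n) := by
    intro k
    fin_cases k <;> simp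
  let e : Fin 2 ≃ ({i, j} : Finset n) :=
    Equiv.ofBijective (fun k => ⟨![i, j] k, hmem k⟩) <| by
      rw [Fintype.bijective_iff_injective_and_card]
      refine ⟨fun a b hab => hinj (congrArg Subtype.val hab), ?_⟩
      rw [Fintype.card_coe, Finset.card_pair hij, Fintype.card_fin]
  rw [← det_submatrix_equiv_self e, det_fin_two]
  rfl

variable [PartialOrder R] [IsOrderedRing R]

theorem det_submatrix_nonpos_of_card_eq_two {M : Matrix n n R} (hM : ∀ i j, 0 ≤ M i j)
    (hdiag : ∀ i j, i ≠ j → M i i * M j j = 0) {s : Finset n} (hs : s.card = 2) :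
    (M.submatrix (Subtype.val : s → n) Subtype.val).det ≤ 0 := by
  obtain ⟨i, j, hij, rfl⟩ := Finset.card_eq_two.mp hs
  rw [det_submatrix_pair M hij, hdiag i j hij, zero_sub, neg_nonpos]
  exact mul_nonneg (hM i j) (hM j i)

variable [Fintype n]

theorem charpoly_coeff_card_sub_two_nonpos {M : Matrix n n R} (hn : 2 ≤ Fintype.card n)
    (hM : ∀ i j, 0 ≤ M i j) (hdiag : ∀ i j, i ≠ j → M i i * M j j = 0) :
    M.charpoly.coeff (Fintype.card n - 2) ≤ 0 := by
  rw [charpoly_coeff_eq_sum_minors M 2 hn, neg_one_sq, one_mul]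
  exact Finset.sum_nonpos fun s hs =>
    det_submatrix_nonpos_of_card_eq_two hM hdiag (Finset.mem_powersetCard.mp hs).2

end Matrix

theorem Polynomial.prod_X_sub_C_coeff_card_sub_two_pos {n R : Type*} [Fintype n]
    [CommRing R] [PartialOrder R] [IsStrictOrderedRing R]
    {e : n → R} (he : ∀ i, 0 < e i) (hn : 2 ≤ Fintype.card n) :
    0 < (∏ i, (X - C (e i))).coeff (Fintype.card n - 2) := by
  classical
  rw [← charpoly_diagonal, charpoly_coeff_eq_sum_minors _ 2 hn, neg_one_sq, one_mul]
  refine Finset.sum_pos (fun s _ => ?_) (Finset.powersetCard_nonempty.mpr (by simpa using hn))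
  rw [submatrix_diagonal _ _ Subtype.val_injective, det_diagonal]
  exact Finset.prod_pos fun i _ => he _

/-- An `n × n` entrywise nonnegative matrix (`n ≥ 2`) all of whose eigenvalues are real and
positive (its characteristic polynomial splits over `ℝ` with positive roots) has at least
two positive diagonal entries. -/
theorem two_positive_diagonal_entries {n : ℕ} (hn : 2 ≤ n)
    (A : Matrix (Fin n) (Fin n) ℝ)
    (hA : ∀ i j, 0 ≤ A i j)
    (e : Fin n → ℝ) (he : ∀ i, 0 < e i)
    (hchar : Matrix.charpoly A = ∏ i, (X - C (e i))) :
    ∃ i j : Fin n, i ≠ j ∧ 0 < A i i ∧ 0 < A j j := by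
  by_contra! hcon
  have hdiag : ∀ i j, i ≠ j → A i i * A j j = 0 := fun i j hij => by
    rcases (hA i i).eq_or_lt with hi | hi
    · rw [← hi, zero_mul]
    · rw [le_antisymm (hcon i j hij hi) (hA j j), mul_zero]
  have hcard : 2 ≤ Fintype.card (Fin n) := by rwa [Fintype.card_fin]
  have hpos := prod_X_sub_C_coeff_card_sub_two_pos he hcard
  rw [← hchar] at hpos
  exact (charpoly_coeff_card_sub_two_nonpos hcard hA hdiag).not_gt hpos
end

section
/- Let A be an n×n irreducible entrywise nonnegative matrix with d ≥ 1 positive diagonal entries. Then A^{2n−d−1} is entrywise positive, i.e., the index of primitivity of A is at most 2n − d − 1. -/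
/-!
If every vertex of a set `S` carries a loop, the set of vertices having a walk of length exactly
`k` into `S` grows with `k`, and grows strictly until it is everything: a set that does not grow
is closed under predecessors, hence everything by strong connectivity. So after `n - #S` steps
every vertex reaches `S`. With `S` the `d` looped vertices, each `i` has a walk of length `n - d`
to some looped `v`; the same argument for `Aᵀ` and `S = {v}` gives walks of length `n - 1` from
`v` to every `j`, and concatenating them gives `A ^ (2n - d - 1) > 0`.
-/

open Matrix Finset

/-- A nonnegative matrix is irreducible when its directed graph is strongly connected,
equivalently each pair of indices is joined by a positive entry of some positive power. -/
def MatIrreducible {n : ℕ} (A : Matrix (Fin n) (Fin n) ℝ) : Prop :=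
  ∀ i j : Fin n, ∃ k : ℕ, 0 < k ∧ 0 < (A ^ k) i j

theorem Finset.eq_univ_of_subset_succ_of_succ_eq {α : Type*} [Fintype α] (T : ℕ → Finset α)
    (hmono : ∀ k, T k ⊆ T (k + 1)) (hgrow : ∀ k, T (k + 1) = T k → T k = univ) :
    T (Fintype.card α - #(T 0)) = univ := by
  have hcard : ∀ k, min (Fintype.card α) (#(T 0) + k) ≤ #(T k) := by
    intro k
    induction k with
    | zero => simp
    | succ k ih =>
      by_cases hk : T k = univ
      · have : T (k + 1) = univ := eq_univ_of_forall fun x => hmono k (hk ▸ mem_univ x)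
        simp [this]
      · have hlt : #(T k) < #(T (k + 1)) :=
          card_lt_card ((hmono k).ssubset_of_ne fun h => hk (hgrow k h.symm))
        omega
  refine eq_univ_of_card _ (le_antisymm (card_le_univ _) ?_)
  have := hcard (Fintype.card α - #(T 0))
  have := card_le_univ (T 0)
  omega

namespace Matrix

section

variable {l m o R : Type*} [Fintype m] [Semiring R] [PartialOrder R] [IsStrictOrderedRing R]

theorem one_apply_pos_iff [DecidableEq l] {i j : l} : 0 < (1 : Matrix l l R) i j ↔ i = j := by
  by_cases h : i = j <;> simp [one_apply, h]

theorem mul_apply_pos_iff {A : Matrix l m R} {B : Matrix m o R}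
    (hA : ∀ i j, 0 ≤ A i j) (hB : ∀ i j, 0 ≤ B i j) (i : l) (k : o) :
    0 < (A * B) i k ↔ ∃ j, 0 < A i j ∧ 0 < B j k := by
  rw [mul_apply, sum_pos_iff_of_nonneg fun j _ => mul_nonneg (hA i j) (hB j k)]
  simp only [mem_univ, true_and]
  refine exists_congr fun j => ⟨fun h => ⟨(hA i j).lt_of_ne ?_, (hB j k).lt_of_ne ?_⟩,
    fun h => mul_pos h.1 h.2⟩
  · rintro hz; simp [← hz] at h
  · rintro hz; simp [← hz] at h

end

variable {ι R : Type*} [Fintype ι] [DecidableEq ι] [CommRing R] [LinearOrder R] {A : Matrix ι ι R}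

def reachingSet (A : Matrix ι ι R) (S : Finset ι) (k : ℕ) : Finset ι :=
  S.biUnion fun v => {i | 0 < (A ^ k) i v}

theorem mem_reachingSet {S : Finset ι} {k : ℕ} {i : ι} :
    i ∈ A.reachingSet S k ↔ ∃ v ∈ S, 0 < (A ^ k) i v := by
  simp [reachingSet]

variable [IsStrictOrderedRing R]

theorem reachingSet_zero (S : Finset ι) : A.reachingSet S 0 = S := by
  ext i
  simp [mem_reachingSet, one_apply_pos_iff]

theorem mem_reachingSet_succ (hA : ∀ i j, 0 ≤ A i j) {S : Finset ι} {k : ℕ} {i : ι} :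
    i ∈ A.reachingSet S (k + 1) ↔ ∃ j, 0 < A i j ∧ j ∈ A.reachingSet S k := by
  simp only [mem_reachingSet, pow_succ', mul_apply_pos_iff hA (pow_apply_nonneg hA k)]
  constructor
  · rintro ⟨v, hv, j, hij, hjv⟩
    exact ⟨j, hij, v, hv, hjv⟩
  · rintro ⟨j, hij, v, hv, hjv⟩
    exact ⟨v, hv, j, hij, hjv⟩

theorem reachingSet_subset_succ (hA : ∀ i j, 0 ≤ A i j) {S : Finset ι}
    (hS : ∀ v ∈ S, 0 < A v v) (k : ℕ) : A.reachingSet S k ⊆ A.reachingSet S (k + 1) := by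
  simp only [subset_iff, mem_reachingSet, pow_succ, mul_apply_pos_iff (pow_apply_nonneg hA k) hA]
  rintro i ⟨v, hv, hiv⟩
  exact ⟨v, hv, v, hiv, hS v hv⟩

theorem IsIrreducible.eq_univ_of_pred_mem (hA : A.IsIrreducible) {T : Finset ι}
    (hT : T.Nonempty) (hclosed : ∀ i j, 0 < A i j → j ∈ T → i ∈ T) : T = univ := by
  obtain ⟨v, hv⟩ := hT
  have hreach : ∀ k i j, 0 < (A ^ k) i j → j ∈ T → i ∈ T := by
    intro k
    induction k with
    | zero =>
      intro i j h hj
      exact one_apply_pos_iff.1 (pow_zero A ▸ h) ▸ hj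
    | succ k ih =>
      intro i j h hj
      obtain ⟨m, him, hmj⟩ := (mul_apply_pos_iff hA.nonneg (pow_apply_nonneg hA.nonneg k) i j).1
        (pow_succ' A k ▸ h)
      exact hclosed i m him (ih m j hmj hj)
  refine eq_univ_of_forall fun i => ?_
  obtain ⟨k, -, hk⟩ := (isIrreducible_iff_exists_pow_pos hA.nonneg).1 hA i v
  exact hreach k i v hk hv

theorem IsIrreducible.exists_pow_apply_pos_of_diag_pos (hA : A.IsIrreducible) {S : Finset ι}
    (hS : S.Nonempty) (hdiag : ∀ v ∈ S, 0 < A v v) (i : ι) :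
    ∃ v ∈ S, 0 < (A ^ (Fintype.card ι - #S)) i v := by
  have hmono := reachingSet_subset_succ hA.nonneg hdiag
  have huniv := eq_univ_of_subset_succ_of_succ_eq (A.reachingSet S) hmono fun k hk => by
    refine hA.eq_univ_of_pred_mem ?_ fun i j hij hj => ?_
    · exact (reachingSet_zero (A := A) S ▸ hS).mono (monotone_nat_of_le_succ hmono k.zero_le)
    · exact hk ▸ (mem_reachingSet_succ hA.nonneg).2 ⟨j, hij, hj⟩
  rw [reachingSet_zero] at huniv
  exact mem_reachingSet.1 (huniv ▸ mem_univ i)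

theorem IsIrreducible.pow_apply_pos_of_diag_pos (hA : A.IsIrreducible) {v : ι} (hv : 0 < A v v)
    (j : ι) : 0 < (A ^ (Fintype.card ι - 1)) v j := by
  obtain ⟨w, hw, hjw⟩ := hA.transpose.exists_pow_apply_pos_of_diag_pos (singleton_nonempty v)
    (by simpa using hv) j
  rw [mem_singleton] at hw
  rwa [hw, ← transpose_pow, transpose_apply] at hjw

end Matrix

/-- Horn–Johnson, Theorem 8.5.9: an irreducible `n × n` nonnegative matrix with `d ≥ 1`
positive diagonal entries satisfies `A^{2n-d-1} > 0` entrywise; in particular its index of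
primitivity is at most `2n - d - 1`. -/
theorem index_of_primitivity_le {n : ℕ}
    (A : Matrix (Fin n) (Fin n) ℝ)
    (hA : ∀ i j, 0 ≤ A i j)
    (hirr : MatIrreducible A)
    (d : ℕ)
    (hd : d = (Finset.univ.filter (fun i : Fin n => 0 < A i i)).card)
    (hd1 : 1 ≤ d) :
    ∀ i j, 0 < (A ^ (2 * n - d - 1)) i j := by
  intro i j
  have hA' : A.IsIrreducible := (isIrreducible_iff_exists_pow_pos hA).2 hirr
  have hdn : d ≤ n := hd ▸ (card_filter_le _ _).trans_eq (card_fin n)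
  obtain ⟨v, hvD, hiv⟩ := hA'.exists_pow_apply_pos_of_diag_pos (card_pos.1 (hd ▸ hd1))
    (fun v hv => (mem_filter.1 hv).2) i
  have hvj := hA'.pow_apply_pos_of_diag_pos (mem_filter.1 hvD).2 j
  rw [Fintype.card_fin, ← hd] at hiv
  rw [Fintype.card_fin] at hvj
  rw [show 2 * n - d - 1 = (n - d) + (n - 1) by omega, pow_add]
  exact (mul_apply_pos_iff (pow_apply_nonneg hA _) (pow_apply_nonneg hA _) i j).2 ⟨v, hiv, hvj⟩
end

section
/- Every irreducible n×n GDN matrix (n ≥ 2, with all eigenvalues positive) has index of primitivity at most 2n − 3. -/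
/-!
A nonnegative matrix with at most one positive diagonal entry satisfies `(tr A)² ≤ tr (A²)`,
whereas a diagonalizable `A` with `n ≥ 2` positive eigenvalues `eᵢ` has
`tr (A²) = ∑ eᵢ² < (∑ eᵢ)² = (tr A)²`. Hence the digraph of `A` has loops at two vertices `u ≠ v`.
In a digraph on `n` vertices, a vertex that reaches a set `T` reaches it within `n - #T` steps.
So every `i` reaches `{u, v}` within `n - 2` steps, from there any `j` is reached within
`n - 1` steps, and waiting on the loop pads the walk to length exactly `2n - 3`.
-/

open Matrix

open Finset

namespace Finset

variable {ι R : Type*} {s : Finset ι} {f : ι → R}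

theorem sq_sum_eq_sum_sq_of_mul_eq_zero [Semiring R]
    (hf : ∀ i ∈ s, ∀ j ∈ s, i ≠ j → f i * f j = 0) : (∑ i ∈ s, f i) ^ 2 = ∑ i ∈ s, f i ^ 2 := by
  simp only [sq, sum_mul_sum]
  exact sum_congr rfl fun i hi => sum_eq_single_of_mem i hi fun j hj hji => hf i hi j hj hji.symm

theorem sum_sq_lt_sq_sum_of_pos [Semiring R] [LinearOrder R] [IsStrictOrderedRing R]
    (hs : 1 < #s) (hf : ∀ i ∈ s, 0 < f i) : ∑ i ∈ s, f i ^ 2 < (∑ i ∈ s, f i) ^ 2 := by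
  simp only [sq, sum_mul_sum, ← mul_sum]
  refine sum_lt_sum_of_nonempty (card_pos.1 (by omega)) fun i hi => ?_
  obtain ⟨j, hj, hji⟩ := exists_mem_ne hs i
  exact mul_lt_mul_of_pos_left
    (single_lt_sum hji hi hj (hf j hj) fun k hk _ => (hf k hk).le) (hf i hi)

end Finset

namespace Matrix

section Reachability

variable {ι R : Type*} [Fintype ι] [DecidableEq ι] [Semiring R] [LinearOrder R]
  [IsStrictOrderedRing R] {A : Matrix ι ι R}

theorem pow_add_apply_pos (hA : ∀ i j, 0 ≤ A i j) {a b : ℕ} {i w j : ι}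
    (h₁ : 0 < (A ^ a) i w) (h₂ : 0 < (A ^ b) w j) : 0 < (A ^ (a + b)) i j := by
  rw [pow_add, mul_apply]
  exact sum_pos' (fun m _ => mul_nonneg (pow_apply_nonneg hA a i m) (pow_apply_nonneg hA b m j))
    ⟨w, mem_univ w, mul_pos h₁ h₂⟩

theorem pow_apply_self_pos (hA : ∀ i j, 0 ≤ A i j) {w : ι} (h : 0 < A w w) (m : ℕ) :
    0 < (A ^ m) w w := by
  induction m with
  | zero => simp
  | succ m ih => exact pow_add_apply_pos hA ih (by rwa [pow_one])

theorem exists_pow_apply_pos_of_pow_succ_apply_pos (hA : ∀ i j, 0 ≤ A i j) {k : ℕ} {i j : ι}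
    (h : 0 < (A ^ (k + 1)) i j) : ∃ x, 0 < (A ^ k) i x ∧ 0 < A x j := by
  rw [pow_succ, mul_apply, sum_pos_iff_of_nonneg
    fun x _ => mul_nonneg (pow_apply_nonneg hA k i x) (hA x j)] at h
  obtain ⟨x, -, hx⟩ := h
  refine ⟨x, (pow_apply_nonneg hA k i x).lt_of_ne ?_, (hA x j).lt_of_ne ?_⟩ <;>
    rintro h0 <;> simp [← h0] at hx

theorem exists_notMem_mem_apply_pos_of_pow_apply_pos (hA : ∀ i j, 0 ≤ A i j) {T : Finset ι}
    {k : ℕ} {i w : ι} (hi : i ∉ T) (hw : w ∈ T) (h : 0 < (A ^ k) i w) :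
    ∃ x ∉ T, ∃ y ∈ T, 0 < A x y := by
  induction k generalizing w with
  | zero =>
    obtain rfl : i = w := by by_contra hne; simp [one_apply_ne hne] at h
    exact absurd hw hi
  | succ k ih =>
    obtain ⟨x, hix, hxw⟩ := exists_pow_apply_pos_of_pow_succ_apply_pos hA h
    by_cases hx : x ∈ T
    · exact ih hx hix
    · exact ⟨x, hx, w, hw, hxw⟩

/-- Adjoining to `T` a vertex with an edge into `T` shrinks `Tᶜ` by one and costs at most one
extra step. -/
theorem exists_pow_apply_pos_le_card_compl (hA : ∀ i j, 0 ≤ A i j) (T : Finset ι) {k : ℕ}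
    {i w : ι} (hw : w ∈ T) (h : 0 < (A ^ k) i w) :
    ∃ m ≤ #Tᶜ, ∃ w' ∈ T, 0 < (A ^ m) i w' := by
  by_cases hi : i ∈ T
  · exact ⟨0, Nat.zero_le _, i, hi, by simp⟩
  obtain ⟨x, hx, y, hy, hxy⟩ := exists_notMem_mem_apply_pos_of_pow_apply_pos hA hi hw h
  have hcard : #(insert x T)ᶜ < #Tᶜ := by
    rw [compl_insert]
    exact card_erase_lt_of_mem (mem_compl.2 hx)
  obtain ⟨m, hm, w', hw', hiw'⟩ :=
    exists_pow_apply_pos_le_card_compl hA (insert x T) (mem_insert_of_mem hw) h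
  rcases mem_insert.1 hw' with rfl | hw'
  · exact ⟨m + 1, by omega, y, hy, pow_add_apply_pos hA hiw' (by rwa [pow_one])⟩
  · exact ⟨m, by omega, w', hw', hiw'⟩
termination_by #Tᶜ
decreasing_by exact hcard

end Reachability

section Trace

variable {ι R : Type*} [Fintype ι] [DecidableEq ι]

theorem trace_pow_conj_diagonal [CommRing R] {S : Matrix ι ι R} (hS : IsUnit S.det) (e : ι → R)
    (k : ℕ) : trace ((S * diagonal e * S⁻¹) ^ k) = ∑ i, e i ^ k := by
  obtain ⟨u, rfl⟩ := (isUnit_iff_isUnit_det S).2 hS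
  rw [← coe_units_inv, Units.conj_pow, trace_units_conj, diagonal_pow, trace_diagonal]
  rfl

theorem sum_diag_sq_le_trace_sq [Semiring R] [PartialOrder R] [IsOrderedRing R]
    {A : Matrix ι ι R} (hA : ∀ i j, 0 ≤ A i j) : ∑ i, A i i ^ 2 ≤ trace (A ^ 2) := by
  simp only [trace, diag, sq, mul_apply]
  exact sum_le_sum fun i _ =>
    single_le_sum (f := fun j => A i j * A j i) (fun j _ => mul_nonneg (hA i j) (hA j i))
      (mem_univ i)

theorem exists_ne_diag_pos_of_eq_conj_diagonal [CommRing R] [LinearOrder R]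
    [IsStrictOrderedRing R] (hι : 1 < Fintype.card ι) {A S : Matrix ι ι R} {e : ι → R}
    (hA : ∀ i j, 0 ≤ A i j) (he : ∀ i, 0 < e i) (hS : IsUnit S.det)
    (hdiag : A = S * diagonal e * S⁻¹) : ∃ u v, u ≠ v ∧ 0 < A u u ∧ 0 < A v v := by
  by_contra! hcon
  have hdiag_mul_eq_zero : ∀ i ∈ univ, ∀ j ∈ univ, i ≠ j → A i i * A j j = 0 := by
    intro i _ j _ hij
    rcases (hA i i).eq_or_lt with h0 | hpos
    · rw [← h0, zero_mul]
    · rw [le_antisymm (hcon i j hij hpos) (hA j j), mul_zero]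
  have htrace : trace A = ∑ i, e i := by
    simpa [← hdiag] using trace_pow_conj_diagonal hS e 1
  have := calc
    trace A ^ 2 = ∑ i, A i i ^ 2 := sq_sum_eq_sum_sq_of_mul_eq_zero hdiag_mul_eq_zero
    _ ≤ trace (A ^ 2) := sum_diag_sq_le_trace_sq hA
    _ = ∑ i, e i ^ 2 := by rw [hdiag, trace_pow_conj_diagonal hS]
    _ < (∑ i, e i) ^ 2 := sum_sq_lt_sq_sum_of_pos hι fun i _ => he i
    _ = trace A ^ 2 := by rw [htrace]
  exact this.false

end Trace

end Matrix

/-- Every irreducible `n × n` GDN matrix (`n ≥ 2`, diagonalizable with all eigenvalues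
positive, entrywise nonnegative) has index of primitivity at most `2n - 3`:
`A^{2n-3}` is entrywise positive. -/
theorem GDN_index_of_primitivity_le {n : ℕ} (hn : 2 ≤ n)
    (A S : Matrix (Fin n) (Fin n) ℝ) (e : Fin n → ℝ)
    (hA : ∀ i j, 0 ≤ A i j)
    (he : ∀ i, 0 < e i)
    (hS : IsUnit S.det)
    (hdiag : A = S * Matrix.diagonal e * S⁻¹)
    (hirr : MatIrreducible A) :
    ∀ i j, 0 < (A ^ (2 * n - 3)) i j := by
  obtain ⟨u, v, huv, hu, hv⟩ :=
    exists_ne_diag_pos_of_eq_conj_diagonal (by simpa) hA he hS hdiag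
  intro i j
  obtain ⟨k, -, hiu⟩ := hirr i u
  obtain ⟨a, ha, w, hw, hiw⟩ :=
    exists_pow_apply_pos_le_card_compl hA {u, v} (mem_insert_self u {v}) hiu
  obtain ⟨l, -, hwj⟩ := hirr w j
  obtain ⟨b, hb, j', hj', hwj'⟩ :=
    exists_pow_apply_pos_le_card_compl hA {j} (mem_singleton_self j) hwj
  obtain rfl := mem_singleton.1 hj'
  have hww : 0 < A w w := by
    rcases mem_insert.1 hw with rfl | hw
    · exact hu
    · rwa [mem_singleton.1 hw]
  rw [card_compl, card_pair huv, Fintype.card_fin] at ha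
  rw [card_compl, card_singleton, Fintype.card_fin] at hb
  have hsplit : 2 * n - 3 = a + (2 * n - 3 - a - b) + b := by omega
  rw [hsplit]
  exact pow_add_apply_pos hA (pow_add_apply_pos hA hiw (pow_apply_self_pos hA hww _)) hwj'
end

section
/- Let n ≥ 3 be odd, let d_1 > d_2 > ... > d_{n−1} > d_n = 0, and let 0 < ε < min_i (d_i − d_{i+1})/2. Let A be the n×n matrix with A_{ii} = d_i, A_{i,i+1} = ε for 1 ≤ i ≤ n−1, A_{n,1} = ε, and all other entries zero. Then all eigenvalues of A are real and positive, so A is GDN. -/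
/-!
The matrix is `diag d + ε P` with `P` the cyclic shift. Solving `A v = x v` row by row from
`v 0 = 1` shows that `x` is an eigenvalue as soon as `∏ j, (x - d j) = εⁿ`. The `d j` are more
than `2ε` apart, so on `[d i - ε, d i + ε]` every other factor has absolute value `> ε` and a fixed
sign; hence `∏ j, (x - d j) - εⁿ` changes sign there, giving `n` distinct real eigenvalues and
making `A` diagonalizable. They are positive: for `x ≤ 0 ≤ d j` the product has an odd number of
nonpositive factors, so it is `≤ 0 < εⁿ`.
-/

open Matrix Finset

section CyclicBidiagonal

variable {R : Type*}

def cyclicBidiagonal [Semiring R] (n : ℕ) (d : ℕ → R) (c : R) : Matrix (Fin n) (Fin n) R :=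
  diagonal (fun i : Fin n => d i) + c • (finRotate n).toPEquiv.toMatrix

lemma cyclicBidiagonal_apply [Semiring R] {n : ℕ} (hn : 2 ≤ n) (d : ℕ → R) (c : R) (i j : Fin n) :
    cyclicBidiagonal n d c i j =
      if (i : ℕ) = j then d i
      else if (j : ℕ) = i + 1 then c
      else if (i : ℕ) = n - 1 ∧ (j : ℕ) = 0 then c
      else 0 := by
  obtain ⟨m, rfl⟩ : ∃ m, n = m + 1 := ⟨n - 1, by omega⟩
  have hrot : (finRotate (m + 1) i : ℕ) = if (i : ℕ) = m then 0 else (i : ℕ) + 1 := by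
    rcases eq_or_ne i (Fin.last m) with rfl | hi
    · simp
    · rw [coe_finRotate_of_ne_last hi, if_neg (by simpa [Fin.ext_iff] using hi)]
  simp only [cyclicBidiagonal, Matrix.add_apply, diagonal_apply, Matrix.smul_apply,
    PEquiv.toMatrix_apply, Equiv.toPEquiv_apply, Option.mem_def, Option.some.injEq, Fin.ext_iff,
    hrot, smul_eq_mul, add_tsub_cancel_right]
  split_ifs <;> first | rfl | (exfalso; omega) | simp

/-- Rows `0, …, n - 2` of `(A - x) v = 0` force this `v` once `v 0 = 1`; the last row is `hx`. -/
lemma cyclicBidiagonal_mulVec_eq_smul [Field R] {m : ℕ} (d : ℕ → R) {c x : R} (hc : c ≠ 0)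
    (hx : ∏ j ∈ range (m + 1), (x - d j) = c ^ (m + 1)) :
    cyclicBidiagonal (m + 1) d c *ᵥ (fun k : Fin (m + 1) => ∏ j ∈ range k, (x - d j) / c) =
      x • fun k : Fin (m + 1) => ∏ j ∈ range k, (x - d j) / c := by
  ext k
  simp only [cyclicBidiagonal, add_mulVec, smul_mulVec, PEquiv.toMatrix_toPEquiv_mulVec,
    Pi.add_apply, mulVec_diagonal, Pi.smul_apply, Function.comp_apply, smul_eq_mul]
  by_cases hk : k = Fin.last m
  · subst hk
    have hfull : ∏ j ∈ range (m + 1), (x - d j) / c = 1 := by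
      rw [prod_div_distrib, hx, prod_const, card_range, div_self (pow_ne_zero _ hc)]
    rw [prod_range_succ, mul_div_assoc', div_eq_one_iff_eq hc] at hfull
    rw [finRotate_last, Fin.val_zero, prod_range_zero, Fin.val_last]
    linear_combination -hfull
  · rw [coe_finRotate_of_ne_last hk, prod_range_succ]
    field_simp
    ring

end CyclicBidiagonal

lemma Matrix.exists_isUnit_det_eq_mul_diagonal_mul_inv {K ι : Type*} [Field K] [Fintype ι]
    [DecidableEq ι] {A : Matrix ι ι K} {e : ι → K} (he : Function.Injective e) {v : ι → ι → K}
    (hv : ∀ i, v i ≠ 0) (hAv : ∀ i, A *ᵥ v i = e i • v i) :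
    ∃ S : Matrix ι ι K, IsUnit S.det ∧ A = S * diagonal e * S⁻¹ := by
  have hli : LinearIndependent K v :=
    Module.End.eigenvectors_linearIndependent' (toLin' A) e he v fun i =>
      ⟨by rw [Module.End.mem_eigenspace_iff, toLin'_apply, hAv], hv i⟩
  have hS : IsUnit (of v)ᵀ.det :=
    isUnit_det_transpose _ ((isUnit_iff_isUnit_det _).1 (linearIndependent_rows_iff_isUnit.1 hli))
  have hAS : A * (of v)ᵀ = (of v)ᵀ * diagonal e := by
    ext p q
    rw [mul_apply, mul_diagonal]
    simpa [mulVec, dotProduct, mul_comm] using congrFun (hAv q) p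
  exact ⟨(of v)ᵀ, hS, by rw [← mul_nonsing_inv_cancel_right _ A hS, hAS]⟩

section RealRoots

variable {n : ℕ} {d : ℕ → ℝ} {ε : ℝ}

lemma add_two_mul_lt_of_lt (hε : 0 ≤ ε) (hgap : ∀ i, i + 1 < n → d (i + 1) + 2 * ε < d i)
    {i j : ℕ} (hij : i < j) (hj : j < n) : d j + 2 * ε < d i := by
  induction j, hij using Nat.le_induction with
  | base => exact hgap i hj
  | succ j hij ih => linarith [hgap j hj, ih (by omega)]

lemma two_mul_lt_abs_sub_of_ne (hε : 0 ≤ ε)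
    (hgap : ∀ i, i + 1 < n → d (i + 1) + 2 * ε < d i) {i j : ℕ} (hi : i < n) (hj : j < n)
    (hij : i ≠ j) : 2 * ε < |d i - d j| := by
  rcases lt_or_gt_of_ne hij with h | h
  · exact lt_abs.2 (Or.inl (by linarith [add_two_mul_lt_of_lt hε hgap h hj]))
  · exact lt_abs.2 (Or.inr (by linarith [add_two_mul_lt_of_lt hε hgap h hi]))

lemma nonneg_of_lt_of_last_eq_zero (hε : 0 ≤ ε)
    (hgap : ∀ i, i + 1 < n → d (i + 1) + 2 * ε < d i) (hlast : d (n - 1) = 0) {j : ℕ}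
    (hj : j < n) : 0 ≤ d j := by
  rcases (Nat.le_sub_one_of_lt hj).lt_or_eq with h | rfl
  · linarith [add_two_mul_lt_of_lt hε hgap h (by omega)]
  · exact hlast.ge

lemma exists_prod_sub_eq_of_separated {s : Finset ℕ} {i : ℕ} (hi : i ∈ s)
    (hs : (s.erase i).Nonempty) (hε : 0 < ε) (hsep : ∀ j ∈ s, j ≠ i → 2 * ε < |d i - d j|) {c : ℝ} (hc : |c| ≤ ε ^ #s) :
    ∃ x ∈ Set.Ioo (d i - ε) (d i + ε), ∏ j ∈ s, (x - d j) = c := by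
  set r : ℝ → ℝ := fun x => ∏ j ∈ s.erase i, (x - d j)
  have hbig : ∀ x, |x - d i| ≤ ε → ε ^ #(s.erase i) < |r x| := by
    intro x hx
    rw [abs_prod, ← prod_const]
    refine prod_lt_prod_of_nonempty (fun _ _ => hε) (fun j hj => ?_) hs
    obtain ⟨hji, hj⟩ := mem_erase.1 hj
    have := abs_sub_le (d i) x (d j)
    linarith [hsep j hj hji, abs_sub_comm (d i) x]
  have hsame : 0 < r (d i - ε) * r (d i + ε) := by
    rw [← prod_mul_distrib]
    refine prod_pos fun j hj => ?_
    obtain ⟨hji, hj⟩ := mem_erase.1 hj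
    have := hsep j hj hji
    nlinarith [sq_abs (d i - d j), abs_nonneg (d i - d j)]
  have hq : ∀ x, ∏ j ∈ s, (x - d j) = (x - d i) * r x := fun x => (mul_prod_erase s _ hi).symm
  have hlo := hbig (d i - ε) (by simp [abs_of_pos hε])
  have hhi := hbig (d i + ε) (by simp [abs_of_pos hε])
  have hcont : ContinuousOn (fun x => ∏ j ∈ s, (x - d j)) (Set.Icc (d i - ε) (d i + ε)) := by
    fun_prop
  have hε_pow : ε ^ #s = ε * ε ^ #(s.erase i) := by rw [← card_erase_add_one hi, pow_succ']
  obtain ⟨hc₁, hc₂⟩ := abs_le.1 hc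
  have hab : d i - ε ≤ d i + ε := by linarith
  rcases lt_or_gt_of_ne (abs_pos.1 (lt_of_le_of_lt (by positivity) hhi)) with hneg | hpos
  · have hneg' : r (d i - ε) < 0 := neg_of_mul_pos_left hsame hneg.le
    rw [abs_of_neg hneg] at hhi
    rw [abs_of_neg hneg'] at hlo
    refine intermediate_value_Ioo' hab hcont ⟨?_, ?_⟩ <;>
      simp only [hq, sub_sub_cancel_left, add_sub_cancel_left] <;> nlinarith
  · have hpos' : 0 < r (d i - ε) := pos_of_mul_pos_left hsame hpos.le
    rw [abs_of_pos hpos] at hhi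
    rw [abs_of_pos hpos'] at hlo
    refine intermediate_value_Ioo hab hcont ⟨?_, ?_⟩ <;>
      simp only [hq, sub_sub_cancel_left, add_sub_cancel_left] <;> nlinarith

lemma prod_sub_nonpos_of_nonpos {s : Finset ℕ} (hodd : Odd #s) (hd : ∀ j ∈ s, 0 ≤ d j) {x : ℝ}
    (hx : x ≤ 0) : ∏ j ∈ s, (x - d j) ≤ 0 := by
  have hflip : ∏ j ∈ s, (x - d j) = -∏ j ∈ s, (d j - x) := by
    rw [← neg_one_mul, ← hodd.neg_one_pow, ← prod_neg]
    simp only [neg_sub]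
  rw [hflip, neg_nonpos]
  exact prod_nonneg fun j hj => by linarith [hd j hj]

end RealRoots

theorem bidiagonal_corner_GDN_general {n : ℕ} (hn : 3 ≤ n) (hodd : Odd n)
    (d : ℕ → ℝ) (ε : ℝ)
    (hlast : d (n - 1) = 0)
    (hε : 0 < ε)
    (hεlt : ∀ i, i + 1 < n → ε < (d i - d (i + 1)) / 2)
    (A : Matrix (Fin n) (Fin n) ℝ)
    (hAdef : ∀ i j : Fin n, A i j =
      if (i : ℕ) = (j : ℕ) then d i
      else if (j : ℕ) = (i : ℕ) + 1 then ε
      else if (i : ℕ) = n - 1 ∧ (j : ℕ) = 0 then ε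
      else 0) :
    ∃ (S : Matrix (Fin n) (Fin n) ℝ) (e : Fin n → ℝ),
      (∀ i, 0 < e i) ∧ IsUnit S.det ∧ A = S * Matrix.diagonal e * S⁻¹ := by
  obtain ⟨m, rfl⟩ : ∃ m, n = m + 1 := ⟨n - 1, by omega⟩
  have hA : A = cyclicBidiagonal (m + 1) d ε := by
    ext i j
    rw [hAdef, cyclicBidiagonal_apply (by omega)]
  have hgap : ∀ i, i + 1 < m + 1 → d (i + 1) + 2 * ε < d i := fun i hi => by linarith [hεlt i hi]
  have hroot (i : Fin (m + 1)) :
      ∃ x ∈ Set.Ioo (d i - ε) (d i + ε), ∏ j ∈ range (m + 1), (x - d j) = ε ^ (m + 1) := by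
    refine exists_prod_sub_eq_of_separated (mem_range.2 i.2) ?_ hε
      (fun j hj hji => two_mul_lt_abs_sub_of_ne hε.le hgap i.2 (mem_range.1 hj) hji.symm) ?_
    · exact (one_lt_card_iff_nontrivial.1 (by rw [card_range]; omega)).erase_nonempty
    · rw [card_range, abs_of_pos (pow_pos hε _)]
  choose lam hlam_mem hlam_root using hroot
  have hpos (i : Fin (m + 1)) : 0 < lam i := by
    by_contra! h
    have := prod_sub_nonpos_of_nonpos (by rwa [card_range]) (fun j hj =>
      nonneg_of_lt_of_last_eq_zero hε.le hgap hlast (mem_range.1 hj)) h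
    linarith [hlam_root i, pow_pos hε (m + 1)]
  have hanti : StrictAnti lam := fun i j hij => by
    linarith [(hlam_mem i).1, (hlam_mem j).2, add_two_mul_lt_of_lt hε.le hgap hij j.2]
  obtain ⟨S, hS, hAS⟩ := exists_isUnit_det_eq_mul_diagonal_mul_inv hanti.injective
    (v := fun i k => ∏ j ∈ range k, (lam i - d j) / ε)
    (fun i h => by simpa using congrFun h 0)
    (fun i => hA ▸ cyclicBidiagonal_mulVec_eq_smul d hε.ne' (hlam_root i))
  exact ⟨S, lam, hpos, hS, hAS⟩

/-- The bidiagonal-plus-corner construction: for odd `n ≥ 3`, diagonal entries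
`d 0 > d 1 > ⋯ > d (n-2) > d (n-1) = 0`, superdiagonal entries `ε` with
`0 < ε < (d i - d (i+1))/2`, and corner entry `A (n-1) 0 = ε`, the matrix `A` has all
eigenvalues real and positive; in particular it is diagonalizable with positive
eigenvalues, hence GDN. -/
theorem bidiagonal_corner_GDN {n : ℕ} (hn : 3 ≤ n) (hodd : Odd n)
    (d : ℕ → ℝ) (ε : ℝ)
    (hdec : ∀ i, i + 1 < n → d (i + 1) < d i)
    (hlast : d (n - 1) = 0)
    (hε : 0 < ε)
    (hεlt : ∀ i, i + 1 < n → ε < (d i - d (i + 1)) / 2)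
    (A : Matrix (Fin n) (Fin n) ℝ)
    (hAdef : ∀ i j : Fin n, A i j =
      if (i : ℕ) = (j : ℕ) then d i
      else if (j : ℕ) = (i : ℕ) + 1 then ε
      else if (i : ℕ) = n - 1 ∧ (j : ℕ) = 0 then ε
      else 0) :
    ∃ (S : Matrix (Fin n) (Fin n) ℝ) (e : Fin n → ℝ),
      (∀ i, 0 < e i) ∧ IsUnit S.det ∧ A = S * Matrix.diagonal e * S⁻¹ :=
  bidiagonal_corner_GDN_general hn hodd d ε hlast hε hεlt A hAdef
end

section
/- Let A be an n×n GDN matrix in block upper triangular form A = [[B, C], [0, D]] with B of size k×k (1 ≤ k < n). Then for every real α > 0, the continuous power A^α is also block upper triangular with zero lower-left (n−k)×k block. -/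
open Matrix

/-!
An entry of `S * diagonal (f ∘ d) * S⁻¹` is a sum `∑ l, c l * f (d l)` with `c` independent of
`f`. If it vanishes for `f = (· ^ (m + 1))` and every `m`, it vanishes for every polynomial
without constant term, and Lagrange interpolation on the finitely many eigenvalues together
with `0` turns this into every function `f` with `f 0 = 0`, in particular `f = (· ^ α)`, `α > 0`.
For block triangular `A` the powers `A ^ (m + 1)` keep the zero block, whence so does `A^α`.
-/

open Finset Polynomial

section ExponentialSums

variable {ι : Type*} [Fintype ι]

theorem sum_mul_eval_eq_zero_of_sum_mul_pow_succ_eq_zero {R : Type*} [CommRing R]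
    {c d : ι → R} (h : ∀ m : ℕ, ∑ i, c i * d i ^ (m + 1) = 0) {p : R[X]} (hp : p.eval 0 = 0) :
    ∑ i, c i * p.eval (d i) = 0 := by
  have hcoeff : p.coeff 0 = 0 := by rwa [coeff_zero_eq_eval_zero]
  calc ∑ i, c i * p.eval (d i)
      = ∑ k ∈ range (p.natDegree + 1), p.coeff k * ∑ i, c i * d i ^ k := by
        simp_rw [eval_eq_sum_range, mul_sum, Finset.sum_comm (s := univ)]
        refine sum_congr rfl fun k _ => sum_congr rfl fun i _ => ?_
        ring
    _ = 0 := by simp [sum_range_succ', h, hcoeff]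

theorem sum_mul_apply_eq_zero_of_sum_mul_pow_succ_eq_zero {K : Type*} [Field K]
    {c d : ι → K} (h : ∀ m : ℕ, ∑ i, c i * d i ^ (m + 1) = 0) {f : K → K} (hf : f 0 = 0) :
    ∑ i, c i * f (d i) = 0 := by
  classical
  set p := Lagrange.interpolate (insert 0 (univ.image d)) id f
  have hp : ∀ x ∈ insert 0 (univ.image d), p.eval x = f x := fun x hx =>
    Lagrange.eval_interpolate_at_node f (Set.injOn_id _) hx
  calc ∑ i, c i * f (d i) = ∑ i, c i * p.eval (d i) := by
        refine sum_congr rfl fun i _ => ?_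
        rw [hp _ (mem_insert_of_mem (mem_image_of_mem d (mem_univ i)))]
    _ = 0 := sum_mul_eval_eq_zero_of_sum_mul_pow_succ_eq_zero h
        ((hp 0 (mem_insert_self 0 _)).trans hf)

end ExponentialSums

namespace Matrix

variable {m K : Type*} [Fintype m] [DecidableEq m]

theorem mul_diagonal_mul_apply {R : Type*} [CommSemiring R] (S T : Matrix m m R) (e : m → R)
    (i j : m) : (S * diagonal e * T) i j = ∑ l, S i l * T l j * e l := by
  rw [mul_apply]
  simp only [mul_diagonal]
  exact sum_congr rfl fun l _ => by ring

theorem conj_pow [CommRing K] {S : Matrix m m K} (hS : IsUnit S.det) (D : Matrix m m K) (k : ℕ) :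
    (S * D * S⁻¹) ^ k = S * D ^ k * S⁻¹ := by
  induction k with
  | zero => simp [mul_nonsing_inv S hS]
  | succ k ih =>
    rw [pow_succ, ih, pow_succ]
    simp only [Matrix.mul_assoc, nonsing_inv_mul_cancel_left _ _ hS]

theorem BlockTriangular.conj_diagonal_comp [Field K] {α : Type*} [LinearOrder α] {b : m → α}
    {S : Matrix m m K} (hS : IsUnit S.det) {d : m → K}
    (hA : (S * diagonal d * S⁻¹).BlockTriangular b) {f : K → K} (hf : f 0 = 0) :
    (S * diagonal (f ∘ d) * S⁻¹).BlockTriangular b := by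
  intro i j hij
  rw [mul_diagonal_mul_apply]
  refine sum_mul_apply_eq_zero_of_sum_mul_pow_succ_eq_zero (fun k => ?_) hf
  rw [← mul_diagonal_mul_apply, ← Pi.pow_def, ← diagonal_pow, ← conj_pow hS]
  exact hA.pow (k + 1) hij

end Matrix

theorem contPow_block_upper_triangular_general {n : ℕ}
    (A S : Matrix (Fin n) (Fin n) ℝ) (d : Fin n → ℝ)
    (hS : IsUnit S.det)
    (hdiag : A = S * Matrix.diagonal d * S⁻¹)
    (k : ℕ)
    (hblock : ∀ i j : Fin n, k ≤ (i : ℕ) → (j : ℕ) < k → A i j = 0) :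
    ∀ α : ℝ, 0 < α →
      ∀ i j : Fin n, k ≤ (i : ℕ) → (j : ℕ) < k → contPow S d α i j = 0 := by
  intro α hα i j hi hj
  have hT : A.BlockTriangular fun i : Fin n => decide (k ≤ (i : ℕ)) := by
    intro i j hij
    simp only [Bool.lt_iff, decide_eq_false_iff_not, not_le, decide_eq_true_eq] at hij
    exact hblock i j hij.2 hij.1
  have hcontPow := (hdiag ▸ hT).conj_diagonal_comp hS (f := (· ^ α)) (Real.zero_rpow hα.ne')
  exact hcontPow (by simp [hi, not_le.mpr hj])

/-- If a GDN matrix `A` is block upper triangular with a `k × k` leading block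
(`1 ≤ k < n`), i.e. `A i j = 0` whenever `k ≤ i` and `j < k`, then every continuous power
`A^α`, `α > 0`, is block upper triangular with the same zero lower-left block. -/
theorem contPow_block_upper_triangular {n : ℕ}
    (A S : Matrix (Fin n) (Fin n) ℝ) (d : Fin n → ℝ)
    (hA : ∀ i j, 0 ≤ A i j)
    (hd : ∀ i, 0 ≤ d i)
    (hS : IsUnit S.det)
    (hdiag : A = S * Matrix.diagonal d * S⁻¹)
    (k : ℕ) (hk1 : 1 ≤ k) (hkn : k < n)
    (hblock : ∀ i j : Fin n, k ≤ (i : ℕ) → (j : ℕ) < k → A i j = 0) :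
    ∀ α : ℝ, 0 < α →
      ∀ i j : Fin n, k ≤ (i : ℕ) → (j : ℕ) < k → contPow S d α i j = 0 :=
  contPow_block_upper_triangular_general A S d hS hdiag k hblock
end
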